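/- Let o = (D_{σ(1)},…,D_{σ(k)}) be an admissible ordering of a type-1 Dyck partition P of A(λ,μ) (each D_{σ(j)} can be added to λ + D_{σ(1)} + ⋯ + D_{σ(j−1)}). If σ(j) indices satisfy hgt(D_{σ(j)}) > hgt(D_{σ(j+1)}) for some j, then D_{σ(j)} and D_{σ(j+1)} are distant strips and the ordering obtained by swapping positions j and j+1 is again admissible. Consequently, every admissible order can be transformed by such swaps to the admissible order o_hgt listing strips by weakly increasing height. -/

import Mathlib

open scoped Classical

noncomputable section

/-- The simple transposition `s_j` of `S_n` (0-indexed: it swaps positions `j` and `j+1`). -/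
def sT (n j : ℕ) : Equiv.Perm (Fin n) :=
  if h : j + 1 < n then Equiv.swap ⟨j, Nat.lt_of_succ_lt h⟩ ⟨j + 1, h⟩ else 1

/-- The Coxeter length of a permutation, as its number of inversions. -/
def invLen {n : ℕ} (w : Equiv.Perm (Fin n)) : ℕ :=
  (Finset.univ.filter fun p : Fin n × Fin n => p.1 < p.2 ∧ w p.2 < w p.1).card

/-- The parabolic subgroup `W_I ≅ S_i × S_{n-i}` generated by all simple transpositions
except the `i`-th one (1-indexed: we exclude `s_i`, i.e. the 0-indexed `sT n (i-1)`). -/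
def WIsub (n i : ℕ) : Subgroup (Equiv.Perm (Fin n)) :=
  Subgroup.closure {g | ∃ m : ℕ, m + 1 < n ∧ m + 1 ≠ i ∧ g = sT n m}

/-- `W^I`: the minimal length representatives of the cosets `w W_I`. -/
def minRep (n i : ℕ) : Set (Equiv.Perm (Fin n)) :=
  {w | ∀ m : ℕ, m + 1 < n → m + 1 ≠ i → invLen w < invLen (w * sT n m)}

/-- The path `λ^w = w · (↘,…,↘,↗,…,↗)` associated to `w`; `true` encodes `↘`,
`false` encodes `↗`; the symmetric group permutes positions. -/
def toPath {n : ℕ} (i : ℕ) (w : Equiv.Perm (Fin n)) : Fin n → Bool :=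
  fun k => decide (((w⁻¹ k : Fin n) : ℕ) < i)

/-- `Λ_{n,i}`: the set of `n`-tuples of `↗`/`↘` with exactly `i` entries `↘`. -/
def pathSet (n i : ℕ) : Set (Fin n → Bool) :=
  {lam | (Finset.univ.filter fun k => lam k = true).card = i}

/-- The height of the lattice path of `λ` at horizontal coordinate `j`
(the path starts at `(0,i)`; `↘` is a down-step, `↗` an up-step). -/
def hgt {n : ℕ} (i : ℕ) (lam : Fin n → Bool) (j : ℕ) : ℤ :=
  (i : ℤ) + ∑ k ∈ Finset.univ.filter (fun k : Fin n => (k : ℕ) < j),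
      (if lam k then (-1 : ℤ) else 1)

/-- `λ ≤ μ`: the path `λ` lies weakly below the path `μ`. -/
def pathLE {n : ℕ} (i : ℕ) (lam mu : Fin n → Bool) : Prop :=
  ∀ j ≤ n, hgt i lam j ≤ hgt i mu j

/-- Bruhat order on `S_n`: generated by `a < t·a` for transpositions `t`
with strictly increasing length. -/
def bruhatLE {n : ℕ} (u v : Equiv.Perm (Fin n)) : Prop :=
  Relation.ReflTransGen
    (fun a b => (∃ x y : Fin n, x ≠ y ∧ b = Equiv.swap x y * a) ∧ invLen a < invLen b) u v

/-- A Dyck strip of height `h`: the set of boxes (recorded by their centers) centered at the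
integral points of a Dyck path from `(x₀,h)` to `(x₀+2l,h)` staying weakly below height `h`. -/
def IsDyckStrip (D : Finset (ℤ × ℤ)) (h : ℤ) : Prop :=
  ∃ (x₀ : ℤ) (l : ℕ) (d : ℕ → ℤ),
    d 0 = 0 ∧ d (2 * l) = 0 ∧
    (∀ k < 2 * l, d (k + 1) = d k + 1 ∨ d (k + 1) = d k - 1) ∧
    (∀ k ≤ 2 * l, d k ≤ 0) ∧
    D = (Finset.range (2 * l + 1)).image fun k : ℕ => (x₀ + (k : ℤ), h + d k)

/-- The region `A(λ,μ)` between two paths `λ ≤ μ`, as the set of centers of the boxes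
lying strictly between the two lattice paths. -/
def region {n : ℕ} (i : ℕ) (lam mu : Fin n → Bool) : Set (ℤ × ℤ) :=
  {b | 0 ≤ b.1 ∧ b.1 ≤ (n : ℤ) ∧ Odd (b.1 + b.2 + (i : ℤ)) ∧
    hgt i lam b.1.toNat < b.2 ∧ b.2 < hgt i mu b.1.toNat}

/-- A Dyck partition of a region `A`: a partition of the boxes of `A` into Dyck strips. -/
def IsDyckPartition (P : Finset (Finset (ℤ × ℤ))) (A : Set (ℤ × ℤ)) : Prop :=
  (∀ D ∈ P, ∃ h, IsDyckStrip D h) ∧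
  (∀ D ∈ P, ∀ D' ∈ P, D ≠ D' → Disjoint D D') ∧
  (⋃ D ∈ P, (D : Set (ℤ × ℤ))) = A

/-- Type 1 condition: if some strip `D'` contains a box just above a box of `D`, then every box
just above a box of `D` is in `D'`. -/
def IsType1 (P : Finset (Finset (ℤ × ℤ))) : Prop :=
  ∀ D ∈ P, ∀ D' ∈ P, D ≠ D' → (∃ b ∈ D, (b.1, b.2 + 2) ∈ D') →
    ∀ b ∈ D, (b.1, b.2 + 2) ∈ D'

/-- The boxes just below, SW and SE of a box `b`. -/
def belowBoxes (b : ℤ × ℤ) : Finset (ℤ × ℤ) :=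
  {(b.1, b.2 - 2), (b.1 - 1, b.2 - 1), (b.1 + 1, b.2 - 1)}

/-- Type 2 condition: if some strip `D'` contains a box just below, SW or SE of a box of `D`,
then every box just below, SW or SE of a box of `D` belongs to `D` or `D'`. -/
def IsType2 (P : Finset (Finset (ℤ × ℤ))) : Prop :=
  ∀ D ∈ P, ∀ D' ∈ P, D ≠ D' → (∃ b ∈ D, ∃ c ∈ belowBoxes b, c ∈ D') →
    ∀ b ∈ D, ∀ c ∈ belowBoxes b, c ∈ D ∨ c ∈ D'

/-- `Conf¹(λ,μ)`: the set of type-1 Dyck partitions of the region `A(λ,μ)`. -/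
def Conf1 {n : ℕ} (i : ℕ) (lam mu : Fin n → Bool) : Set (Finset (Finset (ℤ × ℤ))) :=
  {P | IsDyckPartition P (region i lam mu) ∧ IsType1 P}

/-- `Conf²(λ,μ)`: the set of type-2 Dyck partitions of the region `A(λ,μ)`. -/
def Conf2 {n : ℕ} (i : ℕ) (lam mu : Fin n → Bool) : Set (Finset (Finset (ℤ × ℤ))) :=
  {P | IsDyckPartition P (region i lam mu) ∧ IsType2 P}

/-- The height of a Dyck strip (the largest `y`-coordinate of one of its boxes). -/
def stripHeight (D : Finset (ℤ × ℤ)) : ℤ := WithBot.unbotD 0 ((D.image Prod.snd).max)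

/-- Two Dyck strips are distant if no box of one is just above or just below a box of the other. -/
def Distant (D C : Finset (ℤ × ℤ)) : Prop :=
  ∀ b ∈ D, (b.1, b.2 + 2) ∉ C ∧ (b.1, b.2 - 2) ∉ C

/-- The order relation `P ≻ Q` on Dyck partitions. -/
def DPsucc (P Q : Finset (Finset (ℤ × ℤ))) : Prop :=
  ∃ h : ℤ, 0 < h ∧
    (∀ j : ℤ, h < j →
      P.filter (fun D => stripHeight D = j) = Q.filter (fun D => stripHeight D = j)) ∧
    P.filter (fun D => stripHeight D = h) ≠ Q.filter (fun D => stripHeight D = h) ∧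
    (∀ D ∈ P.filter (fun D => stripHeight D = h),
      ∃ D' ∈ Q.filter (fun D => stripHeight D = h), D ⊆ D')

/-- Swap the entries at positions `j` and `j+1` of a list of strips. -/
def swapAt' (l : List (Finset (ℤ × ℤ))) (j : ℕ) : List (Finset (ℤ × ℤ)) :=
  (l.set j (l.getD (j + 1) ∅)).set (j + 1) (l.getD j ∅)

/-- An ordering `o` of Dyck strips is admissible (starting from the path `λ`) if each strip can
be added in turn: there are intermediate paths `ν_0 = λ, ν_1, …` with `A(ν_j, ν_{j+1})`
equal to the `j`-th strip. -/
def Admissible {n : ℕ} (i : ℕ) (lam : Fin n → Bool) (o : List (Finset (ℤ × ℤ))) : Prop :=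
  ∃ ν : ℕ → (Fin n → Bool), ν 0 = lam ∧ (∀ j, ν j ∈ pathSet n i) ∧
    ∀ j < o.length, pathLE i (ν j) (ν (j + 1)) ∧
      region i (ν j) (ν (j + 1)) = ↑(o.getD j ∅)

/-!
Adding a Dyck strip of height `h` to a path `ν` raises `ν` by one box on each column of an
interval `a … b` at whose ends `ν` has height `h - 1`, and the strip is the row of boxes sitting
on `ν` there. Let the strip `D` be followed by a lower strip `C`. Their column intervals are
disjoint: a shared column puts a box of `C` just above a box of `D`, so by type 1 also just above
the top box `(a, hgt D)` of `D`, which `C` cannot reach. They are not adjacent either, since the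
intermediate path would step from `hgt D + 1` to `hgt C - 1`. Hence `D` and `C` are distant, and
raisings on two column intervals with a gap between them commute, so `C` may be added first.
Each such swap removes a height inversion, so bubble sort ends at the increasing order.
-/

section Heights

variable {n : ℕ} (i : ℕ) (ν : Fin n → Bool)

theorem hgt_zero : hgt i ν 0 = i := by
  simp [hgt]

theorem hgt_succ {j : ℕ} (hj : j < n) :
    hgt i ν (j + 1) = hgt i ν j + if ν ⟨j, hj⟩ then -1 else 1 := by
  have hcols : Finset.univ.filter (fun k : Fin n => (k : ℕ) < j + 1)
      = insert ⟨j, hj⟩ (Finset.univ.filter fun k : Fin n => (k : ℕ) < j) := by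
    ext k
    simp only [Finset.mem_filter, Finset.mem_univ, true_and, Finset.mem_insert, Fin.ext_iff]
    omega
  rw [hgt, hgt, hcols, Finset.sum_insert (by simp)]
  ring

theorem hgt_succ_eq_add_one_or_eq_sub_one {j : ℕ} (hj : j < n) :
    hgt i ν (j + 1) = hgt i ν j + 1 ∨ hgt i ν (j + 1) = hgt i ν j - 1 := by
  rw [hgt_succ i ν hj]
  cases ν ⟨j, hj⟩ <;> simp [sub_eq_add_neg]

theorem even_hgt_add {j : ℕ} (hj : j ≤ n) : Even (hgt i ν j + i + j) := by
  induction j with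
  | zero => simp [hgt_zero]
  | succ j ih =>
    obtain ⟨t, ht⟩ := ih (by omega)
    rcases hgt_succ_eq_add_one_or_eq_sub_one i ν (j := j) (by omega) with h | h
    · exact ⟨t + 1, by push_cast; omega⟩
    · exact ⟨t, by push_cast; omega⟩

theorem hgt_last : hgt i ν n = i + n - 2 * (Finset.univ.filter fun k => ν k = true).card := by
  have hcols : Finset.univ.filter (fun k : Fin n => (k : ℕ) < n) = Finset.univ := by
    ext k; simp
  have hcard := Finset.card_filter_add_card_filter_not (s := Finset.univ)
    (fun k : Fin n => ν k = true)
  rw [hgt, hcols, Finset.sum_ite]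
  simp only [Finset.sum_const, smul_neg, nsmul_eq_mul, mul_one, Finset.card_univ,
    Fintype.card_fin] at hcard ⊢
  push_cast [← hcard]
  ring

theorem mem_pathSet_iff : ν ∈ pathSet n i ↔ hgt i ν n = n - i := by
  rw [pathSet, Set.mem_ofPred_eq, hgt_last]
  omega

end Heights

def pathOfHeights (n : ℕ) (f : ℕ → ℤ) : Fin n → Bool := fun k => decide (f (k + 1) < f k)

theorem hgt_pathOfHeights {n i : ℕ} {f : ℕ → ℤ} (h0 : f 0 = i)
    (hstep : ∀ x < n, f (x + 1) = f x + 1 ∨ f (x + 1) = f x - 1) {x : ℕ} (hx : x ≤ n) :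
    hgt i (pathOfHeights n f) x = f x := by
  induction x with
  | zero => rw [hgt_zero, h0]
  | succ x ih =>
    rw [hgt_succ i _ (by omega), ih (by omega), pathOfHeights]
    rcases hstep x (by omega) with h | h <;> simp [h, sub_eq_add_neg]

/-- `ν'` is `ν` with one box added on each of the columns `a, …, b`. -/
def RaisedOn {n : ℕ} (i : ℕ) (ν ν' : Fin n → Bool) (a b : ℕ) : Prop :=
  ∀ x ≤ n, hgt i ν' x = hgt i ν x + if a ≤ x ∧ x ≤ b then 2 else 0

def boxesAbove {n : ℕ} (i : ℕ) (ν : Fin n → Bool) (a b : ℕ) : Finset (ℤ × ℤ) :=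
  (Finset.Icc a b).image fun x : ℕ => ((x : ℤ), hgt i ν x + 1)

section Region

variable {n i : ℕ} {ν ν' : Fin n → Bool}

theorem natCast_mk_mem_region_iff {x : ℕ} {y : ℤ} :
    ((x : ℤ), y) ∈ region i ν ν' ↔
      x ≤ n ∧ Odd ((x : ℤ) + y + i) ∧ hgt i ν x < y ∧ y < hgt i ν' x := by
  simp [region]

theorem eq_or_mem_region_of_pathLE (hle : pathLE i ν ν') {x : ℕ} (hx : x ≤ n) :
    hgt i ν' x = hgt i ν x ∨
      (((x : ℤ), hgt i ν x + 1) ∈ region i ν ν' ∧ ((x : ℤ), hgt i ν' x - 1) ∈ region i ν ν') := by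
  obtain ⟨s, hs⟩ := even_hgt_add i ν hx
  obtain ⟨t, ht⟩ := even_hgt_add i ν' hx
  have := hle x hx
  by_cases heq : hgt i ν' x = hgt i ν x
  · exact Or.inl heq
  · refine Or.inr ⟨natCast_mk_mem_region_iff.2 ⟨hx, ⟨s, ?_⟩, ?_, ?_⟩,
      natCast_mk_mem_region_iff.2 ⟨hx, ⟨t - 1, ?_⟩, ?_, ?_⟩⟩ <;> omega

theorem mem_boxesAbove {a b : ℕ} {p : ℤ × ℤ} :
    p ∈ boxesAbove i ν a b ↔ ∃ x : ℕ, a ≤ x ∧ x ≤ b ∧ p = ((x : ℤ), hgt i ν x + 1) := by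
  simp [boxesAbove, and_assoc, eq_comm]

theorem boxesAbove_congr {a b : ℕ} (h : ∀ x, a ≤ x → x ≤ b → hgt i ν x = hgt i ν' x) :
    boxesAbove i ν a b = boxesAbove i ν' a b := by
  refine Finset.image_congr fun x hx => ?_
  rw [Finset.mem_coe, Finset.mem_Icc] at hx
  simp [h x hx.1 hx.2]

theorem RaisedOn.pathLE {a b : ℕ} (h : RaisedOn i ν ν' a b) : pathLE i ν ν' := by
  intro x hx
  rw [h x hx]
  split_ifs <;> omega

theorem RaisedOn.region_eq {a b : ℕ} (h : RaisedOn i ν ν' a b) (hb : b ≤ n) :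
    region i ν ν' = ↑(boxesAbove i ν a b) := by
  ext ⟨x, y⟩
  rw [Finset.mem_coe, mem_boxesAbove]
  constructor
  · intro hxy
    lift x to ℕ using hxy.1
    obtain ⟨hx, -, hlo, hhi⟩ := natCast_mk_mem_region_iff.1 hxy
    rw [h x hx] at hhi
    split_ifs at hhi with hab
    · exact ⟨x, hab.1, hab.2, Prod.ext rfl (by dsimp only; omega)⟩
    · omega
  · rintro ⟨x, hax, hxb, hxy⟩
    simp only [Prod.mk.injEq] at hxy
    obtain ⟨rfl, rfl⟩ := hxy
    obtain ⟨s, hs⟩ := even_hgt_add i ν (j := x) (by omega)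
    refine natCast_mk_mem_region_iff.2 ⟨by omega, ⟨s, by omega⟩, by omega, ?_⟩
    rw [h x (by omega), if_pos ⟨hax, hxb⟩]
    omega

end Region

namespace IsDyckStrip

variable {D : Finset (ℤ × ℤ)} {h : ℤ}

theorem exists_graph (hD : IsDyckStrip D h) :
    ∃ (x₀ x₁ : ℤ) (y : ℤ → ℤ), x₀ ≤ x₁ ∧ y x₀ = h ∧ y x₁ = h ∧
      ∀ p, p ∈ D ↔ (x₀ ≤ p.1 ∧ p.1 ≤ x₁) ∧ p.2 = y p.1 := by
  obtain ⟨x₀, l, d, hd0, hdl, -, -, rfl⟩ := hD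
  refine ⟨x₀, x₀ + 2 * l, fun x => h + d (x - x₀).toNat, by omega, by simp [hd0], ?_, ?_⟩
  · dsimp only
    rw [show (x₀ + 2 * (l : ℤ) - x₀).toNat = 2 * l by omega, hdl, add_zero]
  rintro ⟨x, y⟩
  simp only [Finset.mem_image, Finset.mem_range, Prod.mk.injEq]
  constructor
  · rintro ⟨k, hk, rfl, rfl⟩
    exact ⟨⟨by omega, by omega⟩, by simp⟩
  · rintro ⟨hx, rfl⟩
    exact ⟨(x - x₀).toNat, by omega, by omega, rfl⟩

theorem snd_le (hD : IsDyckStrip D h) {p : ℤ × ℤ} (hp : p ∈ D) : p.2 ≤ h := by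
  obtain ⟨x₀, l, d, -, -, -, hle, rfl⟩ := hD
  obtain ⟨k, hk, rfl⟩ := Finset.mem_image.1 hp
  have := hle k (by simp at hk; omega)
  dsimp only
  omega

theorem stripHeight_eq (hD : IsDyckStrip D h) : stripHeight D = h := by
  obtain ⟨x₀, x₁, y, hx, hy, -, hmem⟩ := hD.exists_graph
  have hmax : (D.image Prod.snd).max = (h : WithBot ℤ) :=
    le_antisymm (Finset.max_le fun z hz => by
      obtain ⟨p, hp, rfl⟩ := Finset.mem_image.1 hz
      exact WithBot.coe_le_coe.2 (hD.snd_le hp))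
      (Finset.le_max (Finset.mem_image_of_mem Prod.snd
        ((hmem (x₀, h)).2 ⟨⟨le_rfl, hx⟩, hy.symm⟩)))
  rw [stripHeight, hmax]
  rfl

end IsDyckStrip

theorem RaisedOn.lt_of_mem_pathSet {n i : ℕ} {ν ν' : Fin n → Bool} {a b : ℕ}
    (h : RaisedOn i ν ν' a b) (hν : ν ∈ pathSet n i) (hν' : ν' ∈ pathSet n i) (ha : a ≤ n) :
    b < n := by
  by_contra hbn
  have := h n le_rfl
  rw [if_pos ⟨ha, by omega⟩, (mem_pathSet_iff i ν).1 hν, (mem_pathSet_iff i ν').1 hν'] at this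
  omega

theorem exists_raisedOn_of_region_eq {n i : ℕ} {ν ν' : Fin n → Bool} {D : Finset (ℤ × ℤ)} {h : ℤ}
    (hν : ν ∈ pathSet n i) (hν' : ν' ∈ pathSet n i) (hle : pathLE i ν ν')
    (hD : IsDyckStrip D h) (hreg : region i ν ν' = ↑D) :
    ∃ a b : ℕ, a ≤ b ∧ b < n ∧ RaisedOn i ν ν' a b ∧ hgt i ν a = h - 1 ∧ hgt i ν b = h - 1 := by
  obtain ⟨x₀, x₁, y, hx, hy₀, hy₁, hmem⟩ := hD.exists_graph
  simp only [← Finset.mem_coe, ← hreg] at hmem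
  have hcol : ∀ {x : ℤ}, x₀ ≤ x → x ≤ x₁ → (x, y x) ∈ region i ν ν' := fun h₀ h₁ =>
    (hmem _).2 ⟨⟨h₀, h₁⟩, rfl⟩
  lift x₀ to ℕ using (hcol le_rfl hx).1
  lift x₁ to ℕ using (hcol (by omega) le_rfl).1
  have hin : ∀ {x : ℕ}, x₀ ≤ x → x ≤ x₁ → x ≤ n ∧ hgt i ν x < y x ∧ y x < hgt i ν' x := by
    intro x h₀ h₁
    obtain ⟨hxn, -, hlo, hhi⟩ := natCast_mk_mem_region_iff.1 (hcol (x := x) (by omega) (by omega))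
    exact ⟨hxn, hlo, hhi⟩
  have hraised : RaisedOn i ν ν' x₀ x₁ := by
    intro x hx
    rcases eq_or_mem_region_of_pathLE hle hx with heq | ⟨hlo, hhi⟩
    · split_ifs with hx'
      · have := hin hx'.1 hx'.2
        omega
      · omega
    · obtain ⟨⟨h₀, h₁⟩, hlo⟩ := (hmem _).1 hlo
      obtain ⟨-, hhi⟩ := (hmem _).1 hhi
      simp only at h₀ h₁ hlo hhi
      rw [if_pos ⟨by omega, by omega⟩]
      omega
  have hend : ∀ {x : ℕ}, x₀ ≤ x → x ≤ x₁ → hgt i ν x = y x - 1 := by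
    intro x h₀ h₁
    have := hin h₀ h₁
    have := hraised x this.1
    rw [if_pos ⟨h₀, h₁⟩] at this
    omega
  refine ⟨x₀, x₁, by omega, hraised.lt_of_mem_pathSet hν hν' (hin le_rfl (by omega)).1, hraised,
    ?_, ?_⟩
  · rw [hend le_rfl (by omega), hy₀]
  · rw [hend (by omega) le_rfl, hy₁]

theorem RaisedOn.swap {n i : ℕ} {ν₀ ν₁ ν₂ : Fin n → Bool} {a b c d : ℕ}
    (h₀₁ : RaisedOn i ν₀ ν₁ a b) (h₁₂ : RaisedOn i ν₁ ν₂ c d)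
    (hν₀ : ν₀ ∈ pathSet n i) (hν₂ : ν₂ ∈ pathSet n i) (hsep : b + 2 ≤ c ∨ d + 2 ≤ a) :
    ∃ ν, ν ∈ pathSet n i ∧ RaisedOn i ν₀ ν c d ∧ RaisedOn i ν ν₂ a b := by
  obtain ⟨g, hg⟩ : ∃ g : ℕ → ℤ, ∀ x, g x = hgt i ν₀ x + if c ≤ x ∧ x ≤ d then 2 else 0 :=
    ⟨_, fun _ => rfl⟩
  -- thanks to the gap, the columns `c - 1 … d + 1` are not raised from `ν₀` to `ν₁`
  have hnear : ∀ x ≤ n, c ≤ x + 1 → x ≤ d + 1 → g x = hgt i ν₂ x := by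
    intro x hx h₁ h₂
    rw [hg, h₁₂ x hx, h₀₁ x hx, if_neg (show ¬(a ≤ x ∧ x ≤ b) by omega), add_zero]
  have hfar : ∀ x, ¬(c ≤ x ∧ x ≤ d) → g x = hgt i ν₀ x := by
    intro x hx
    rw [hg, if_neg hx, add_zero]
  have hcases : ∀ x ≤ n, g x = hgt i ν₂ x ∨ g x = hgt i ν₀ x := by
    intro x hx
    by_cases hw : c ≤ x ∧ x ≤ d
    · exact Or.inl (hnear x hx (by omega) (by omega))
    · exact Or.inr (hfar x hw)
  have hsteps : ∀ x < n, g (x + 1) = g x + 1 ∨ g (x + 1) = g x - 1 := by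
    intro x hx
    by_cases hw : c ≤ x + 1 ∧ x ≤ d
    · rw [hnear x hx.le (by omega) (by omega), hnear (x + 1) hx (by omega) (by omega)]
      exact hgt_succ_eq_add_one_or_eq_sub_one i ν₂ hx
    · rw [hfar x (by omega), hfar (x + 1) (by omega)]
      exact hgt_succ_eq_add_one_or_eq_sub_one i ν₀ hx
  have hg₀ : g 0 = i := by
    rcases hcases 0 (Nat.zero_le n) with h | h <;> rw [h, hgt_zero]
  have hgν : ∀ x ≤ n, hgt i (pathOfHeights n g) x = g x :=
    fun x hx => hgt_pathOfHeights hg₀ hsteps hx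
  refine ⟨pathOfHeights n g, ?_, fun x hx => by rw [hgν x hx, hg], fun x hx => ?_⟩
  · rw [mem_pathSet_iff, hgν n le_rfl]
    rcases hcases n le_rfl with h | h
    · rw [h, ← mem_pathSet_iff]; exact hν₂
    · rw [h, ← mem_pathSet_iff]; exact hν₀
  · rw [hgν x hx, h₁₂ x hx, h₀₁ x hx, hg]
    ring

theorem distant_boxesAbove {n i : ℕ} {ν ν' : Fin n → Bool} {a b c d : ℕ}
    (hdisj : b < c ∨ d < a) : Distant (boxesAbove i ν a b) (boxesAbove i ν' c d) := by
  intro p hp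
  obtain ⟨x, hax, hxb, rfl⟩ := mem_boxesAbove.1 hp
  constructor <;>
  · rw [mem_boxesAbove]
    rintro ⟨x', hcx', hx'd, he⟩
    have : (x : ℤ) = x' := congrArg Prod.fst he
    omega

theorem RaisedOn.disjoint_of_type1 {n i : ℕ} {ν₀ ν₁ : Fin n → Bool} {a b c d : ℕ}
    {D C : Finset (ℤ × ℤ)} {hD : ℤ} (h₀₁ : RaisedOn i ν₀ ν₁ a b) (hab : a ≤ b) (hb : b ≤ n)
    (hcd : c ≤ d) (hDa : hgt i ν₀ a = hD - 1)
    (hDeq : D = boxesAbove i ν₀ a b) (hCeq : C = boxesAbove i ν₁ c d) (hC : ∀ p ∈ C, p.2 < hD)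
    (htype1 : (∃ p ∈ D, (p.1, p.2 + 2) ∈ C) → ∀ p ∈ D, (p.1, p.2 + 2) ∈ C) :
    b < c ∨ d < a := by
  subst hDeq hCeq
  by_contra hov
  have hx : a ≤ max a c ∧ max a c ≤ b ∧ c ≤ max a c ∧ max a c ≤ d := by omega
  have hstack : (((max a c : ℕ) : ℤ), hgt i ν₀ (max a c) + 1 + 2) ∈ boxesAbove i ν₁ c d := by
    refine mem_boxesAbove.2 ⟨_, hx.2.2.1, hx.2.2.2, ?_⟩
    rw [h₀₁ _ (by omega), if_pos ⟨hx.1, hx.2.1⟩]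
    ring_nf
  have htop := htype1 ⟨_, mem_boxesAbove.2 ⟨_, hx.1, hx.2.1, rfl⟩, hstack⟩ _
    (mem_boxesAbove.2 ⟨a, le_rfl, hab, rfl⟩)
  have := hC _ htop
  dsimp only at this
  omega

theorem RaisedOn.add_two_le_or_add_two_le {n i : ℕ} {ν₀ ν₁ : Fin n → Bool} {a b c d : ℕ}
    {hD hC : ℤ} (h₀₁ : RaisedOn i ν₀ ν₁ a b) (hab : a ≤ b) (hb : b < n) (hd : d < n)
    (hDa : hgt i ν₀ a = hD - 1) (hDb : hgt i ν₀ b = hD - 1)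
    (hCc : hgt i ν₁ c = hC - 1) (hCd : hgt i ν₁ d = hC - 1) (hlt : hC < hD)
    (hdisj : b < c ∨ d < a) :
    b + 2 ≤ c ∨ d + 2 ≤ a := by
  rcases hdisj with hbc | hda
  · refine Or.inl (Nat.lt_of_le_of_ne hbc fun hc => ?_)
    have := hgt_succ_eq_add_one_or_eq_sub_one i ν₁ hb
    rw [hc, h₀₁ b hb.le, if_pos ⟨hab, le_rfl⟩, hDb, hCc] at this
    omega
  · refine Or.inr (Nat.lt_of_le_of_ne hda fun ha => ?_)
    have := hgt_succ_eq_add_one_or_eq_sub_one i ν₁ hd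
    rw [ha, h₀₁ a (by omega), if_pos ⟨le_rfl, hab⟩, hDa, hCd] at this
    omega

theorem exists_swap_of_type1 {n i : ℕ} {ν₀ ν₁ ν₂ : Fin n → Bool}
    (hν₀ : ν₀ ∈ pathSet n i) (hν₁ : ν₁ ∈ pathSet n i) (hν₂ : ν₂ ∈ pathSet n i)
    (hle₀₁ : pathLE i ν₀ ν₁) (hle₁₂ : pathLE i ν₁ ν₂)
    {D C : Finset (ℤ × ℤ)} {hD hC : ℤ} (hDs : IsDyckStrip D hD) (hCs : IsDyckStrip C hC)
    (hregD : region i ν₀ ν₁ = ↑D) (hregC : region i ν₁ ν₂ = ↑C)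
    (htype1 : (∃ p ∈ D, (p.1, p.2 + 2) ∈ C) → ∀ p ∈ D, (p.1, p.2 + 2) ∈ C) (hlt : hC < hD) :
    Distant D C ∧ ∃ ν, ν ∈ pathSet n i ∧ pathLE i ν₀ ν ∧ region i ν₀ ν = ↑C ∧
      pathLE i ν ν₂ ∧ region i ν ν₂ = ↑D := by
  obtain ⟨a, b, hab, hb, h₀₁, hDa, hDb⟩ := exists_raisedOn_of_region_eq hν₀ hν₁ hle₀₁ hDs hregD
  obtain ⟨c, d, hcd, hd, h₁₂, hCc, hCd⟩ := exists_raisedOn_of_region_eq hν₁ hν₂ hle₁₂ hCs hregC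
  have hDeq : D = boxesAbove i ν₀ a b := Finset.coe_inj.1 (hregD.symm.trans (h₀₁.region_eq hb.le))
  have hCeq : C = boxesAbove i ν₁ c d := Finset.coe_inj.1 (hregC.symm.trans (h₁₂.region_eq hd.le))
  have hdisj : b < c ∨ d < a := h₀₁.disjoint_of_type1 hab hb.le hcd hDa hDeq hCeq
    (fun p hp => (hCs.snd_le hp).trans_lt hlt) htype1
  obtain ⟨ν, hν, h₀, h₂⟩ :=
    h₀₁.swap h₁₂ hν₀ hν₂ (h₀₁.add_two_le_or_add_two_le hab hb hd hDa hDb hCc hCd hlt hdisj)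
  refine ⟨hDeq ▸ hCeq ▸ distant_boxesAbove hdisj, ν, hν, h₀.pathLE, ?_, h₂.pathLE, ?_⟩
  · rw [h₀.region_eq hd.le, hCeq]
    refine congrArg _ (boxesAbove_congr fun x hcx hxd => ?_)
    rw [h₀₁ x (by omega), if_neg (by omega), add_zero]
  · rw [h₂.region_eq hb.le, hDeq]
    refine congrArg _ (boxesAbove_congr fun x hax hxb => ?_)
    rw [h₀ x (by omega), if_neg (by omega), add_zero]

theorem length_swapAt' (l : List (Finset (ℤ × ℤ))) (j : ℕ) : (swapAt' l j).length = l.length := by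
  simp [swapAt']

theorem getD_swapAt' {l : List (Finset (ℤ × ℤ))} {j : ℕ} (hj : j + 1 < l.length) (m : ℕ) :
    (swapAt' l j).getD m ∅ = l.getD (Equiv.swap j (j + 1) m) ∅ := by
  simp only [swapAt', List.getD_eq_getElem?_getD, List.getElem?_set, List.length_set,
    Equiv.swap_apply_def]
  by_cases h₁ : m = j
  · subst h₁
    simp [show m < l.length by omega, List.getElem?_eq_getElem hj]
  by_cases h₂ : m = j + 1
  · subst h₂
    simp [hj, List.getElem?_eq_getElem (show j < l.length by omega)]
  simp [h₁, h₂, Ne.symm h₁, Ne.symm h₂]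

theorem perm_swapAt' : ∀ (l : List (Finset (ℤ × ℤ))) (j : ℕ), j + 1 < l.length →
    (swapAt' l j).Perm l
  | x :: y :: l, 0, _ => by simpa [swapAt', List.set] using List.Perm.swap x y l
  | x :: l, j + 1, hj => (perm_swapAt' l j (by simpa using hj)).cons x

theorem Admissible.distant_and_swapAt' {n i : ℕ} {lam : Fin n → Bool}
    {P : Finset (Finset (ℤ × ℤ))} (hstrips : ∀ D ∈ P, ∃ h, IsDyckStrip D h) (htype1 : IsType1 P)
    {o : List (Finset (ℤ × ℤ))} (hnd : o.Nodup) (hoP : o.toFinset = P)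
    (hadm : Admissible i lam o) {j : ℕ} (hj : j + 1 < o.length)
    (hdesc : stripHeight (o.getD (j + 1) ∅) < stripHeight (o.getD j ∅)) :
    Distant (o.getD j ∅) (o.getD (j + 1) ∅) ∧ Admissible i lam (swapAt' o j) := by
  obtain ⟨ν, hν₀, hνP, hνo⟩ := hadm
  have hmem : ∀ m < o.length, o.getD m ∅ ∈ P := fun m hm => by
    rw [← hoP, List.mem_toFinset, List.getD_eq_getElem _ _ hm]
    exact List.getElem_mem hm
  have hne : o.getD j ∅ ≠ o.getD (j + 1) ∅ := by
    rw [List.getD_eq_getElem _ _ (by omega), List.getD_eq_getElem _ _ hj, Ne,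
      hnd.getElem_inj_iff]
    omega
  obtain ⟨hD, hDs⟩ := hstrips _ (hmem j (by omega))
  obtain ⟨hC, hCs⟩ := hstrips _ (hmem (j + 1) hj)
  rw [hDs.stripHeight_eq, hCs.stripHeight_eq] at hdesc
  obtain ⟨hdist, ν', hν', hle₀, hreg₀, hle₂, hreg₂⟩ :=
    exists_swap_of_type1 (hνP j) (hνP (j + 1)) (hνP (j + 2)) (hνo j (by omega)).1
      (hνo (j + 1) hj).1 hDs hCs (hνo j (by omega)).2 (hνo (j + 1) hj).2
      (htype1 _ (hmem j (by omega)) _ (hmem (j + 1) hj) hne) hdesc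
  refine ⟨hdist, Function.update ν (j + 1) ν', by simp [hν₀], fun m => ?_, fun m hm => ?_⟩
  · by_cases hm : m = j + 1 <;> simp [hm, hν', hνP m]
  rw [length_swapAt'] at hm
  rw [getD_swapAt' hj]
  by_cases hmj : m = j
  · subst hmj
    simpa [Function.update_apply] using And.intro hle₀ hreg₀
  by_cases hmj' : m = j + 1
  · subst hmj'
    simpa [Function.update_apply] using And.intro hle₂ hreg₂
  simpa [Function.update_apply, hmj, hmj', Equiv.swap_apply_of_ne_of_ne] using hνo m hm

section Sorting

variable {β : Type*} [LinearOrder β] (f : Finset (ℤ × ℤ) → β)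

def inversions (o : List (Finset (ℤ × ℤ))) : Finset (ℕ × ℕ) :=
  (Finset.range o.length ×ˢ Finset.range o.length).filter
    fun p => p.1 < p.2 ∧ f (o.getD p.2 ∅) < f (o.getD p.1 ∅)

theorem card_inversions_swapAt'_lt {o : List (Finset (ℤ × ℤ))} {j : ℕ} (hj : j + 1 < o.length)
    (hdesc : f (o.getD (j + 1) ∅) < f (o.getD j ∅)) :
    (inversions f (swapAt' o j)).card < (inversions f o).card := by
  set τ := Equiv.swap j (j + 1)
  have hmem : (j, j + 1) ∈ inversions f o := by
    simp only [inversions, Finset.mem_filter, Finset.mem_product, Finset.mem_range]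
    exact ⟨⟨by omega, hj⟩, by omega, hdesc⟩
  have hsub : (inversions f (swapAt' o j)).map (τ.prodCongr τ).toEmbedding ⊆
      (inversions f o).erase (j, j + 1) := by
    intro q hq
    obtain ⟨⟨p₁, p₂⟩, hp, rfl⟩ := Finset.mem_map.1 hq
    simp only [inversions, Finset.mem_filter, Finset.mem_product, Finset.mem_range,
      length_swapAt', getD_swapAt' hj] at hp
    obtain ⟨⟨hp₁, hp₂⟩, hlt, hinv⟩ := hp
    have hp : ¬(p₁ = j ∧ p₂ = j + 1) := by
      rintro ⟨rfl, rfl⟩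
      simp only [Equiv.swap_apply_left, Equiv.swap_apply_right] at hinv
      exact lt_asymm hdesc hinv
    simp only [Finset.mem_erase, inversions, Finset.mem_filter, Finset.mem_product,
      Finset.mem_range, Equiv.toEmbedding_apply, Equiv.prodCongr_apply, Prod.map, ne_eq,
      Prod.mk.injEq]
    refine ⟨?_, ⟨?_, ?_⟩, ?_, hinv⟩ <;> simp only [τ, Equiv.swap_apply_def] <;> split_ifs <;> omega
  calc (inversions f (swapAt' o j)).card
      = ((inversions f (swapAt' o j)).map (τ.prodCongr τ).toEmbedding).card :=
        (Finset.card_map _).symm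
    _ ≤ ((inversions f o).erase (j, j + 1)).card := Finset.card_le_card hsub
    _ < (inversions f o).card := Finset.card_erase_lt_of_mem hmem

theorem exists_reflTransGen_swapAt'_sorted (Q : List (Finset (ℤ × ℤ)) → Prop)
    (hQ : ∀ o j, Q o → j + 1 < o.length → f (o.getD (j + 1) ∅) < f (o.getD j ∅) →
      Q (swapAt' o j))
    {o : List (Finset (ℤ × ℤ))} (ho : Q o) :
    ∃ o', Relation.ReflTransGen (fun o₁ o₂ => Q o₁ ∧ ∃ j, j + 1 < o₁.length ∧
        f (o₁.getD (j + 1) ∅) < f (o₁.getD j ∅) ∧ o₂ = swapAt' o₁ j) o o' ∧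
      Q o' ∧ ∀ j, j + 1 < o'.length → f (o'.getD j ∅) ≤ f (o'.getD (j + 1) ∅) := by
  induction hN : (inversions f o).card using Nat.strong_induction_on generalizing o with
  | _ N ih =>
  by_cases hsorted : ∀ j, j + 1 < o.length → f (o.getD j ∅) ≤ f (o.getD (j + 1) ∅)
  · exact ⟨o, .refl, ho, hsorted⟩
  push Not at hsorted
  obtain ⟨j, hj, hdesc⟩ := hsorted
  obtain ⟨o', hrel, ho', hs⟩ :=
    ih _ (hN ▸ card_inversions_swapAt'_lt f hj hdesc) (hQ o j ho hj hdesc) rfl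
  exact ⟨o', .head ⟨ho, j, hj, hdesc, rfl⟩ hrel, ho', hs⟩

end Sorting

theorem admissible_swap_general (n i : ℕ)
    (lam mu : Fin n → Bool)
    (P : Finset (Finset (ℤ × ℤ))) (hP : P ∈ Conf1 i lam mu)
    (o : List (Finset (ℤ × ℤ))) (hnd : o.Nodup) (hoP : o.toFinset = P)
    (hadm : Admissible i lam o) :
    (∀ j, j + 1 < o.length →
      stripHeight (o.getD (j + 1) ∅) < stripHeight (o.getD j ∅) →
      Distant (o.getD j ∅) (o.getD (j + 1) ∅) ∧ Admissible i lam (swapAt' o j)) ∧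
    (∃ o' : List (Finset (ℤ × ℤ)),
      Relation.ReflTransGen
        (fun o₁ o₂ => Admissible i lam o₁ ∧ ∃ j, j + 1 < o₁.length ∧
          stripHeight (o₁.getD (j + 1) ∅) < stripHeight (o₁.getD j ∅) ∧
          o₂ = swapAt' o₁ j) o o' ∧
      Admissible i lam o' ∧ o'.toFinset = P ∧
      ∀ j, j + 1 < o'.length →
        stripHeight (o'.getD j ∅) ≤ stripHeight (o'.getD (j + 1) ∅)) := by
  have hswap {o : List (Finset (ℤ × ℤ))} (hnd : o.Nodup) (hoP : o.toFinset = P)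
      (hadm : Admissible i lam o) {j : ℕ} (hj : j + 1 < o.length)
      (hdesc : stripHeight (o.getD (j + 1) ∅) < stripHeight (o.getD j ∅)) :=
    hadm.distant_and_swapAt' hP.1.1 hP.2 hnd hoP hj hdesc
  refine ⟨fun j hj hdesc => hswap hnd hoP hadm hj hdesc, ?_⟩
  obtain ⟨o', hrel, ⟨-, ho'P, hadm'⟩, hsorted⟩ :=
    exists_reflTransGen_swapAt'_sorted stripHeight
      (fun o => o.Nodup ∧ o.toFinset = P ∧ Admissible i lam o)
      (fun o j ⟨hnd, hoP, hadm⟩ hj hdesc =>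
        have hperm := perm_swapAt' o j hj
        ⟨hperm.nodup_iff.2 hnd, (List.toFinset_eq_of_perm _ _ hperm).trans hoP,
          (hswap hnd hoP hadm hj hdesc).2⟩)
      ⟨hnd, hoP, hadm⟩
  exact ⟨o', Relation.ReflTransGen.mono (fun _ _ h => ⟨h.1.2.2, h.2⟩) _ _ hrel, hadm', ho'P,
    hsorted⟩

/-- in an admissible ordering of a type-1 Dyck partition, a height descent at
position `j` forces the two strips to be distant and can be swapped, keeping admissibility;
consequently every admissible order can be transformed by such swaps into an admissible order
with weakly increasing heights. -/
theorem admissible_swap (n i : ℕ) (hi1 : 1 ≤ i) (hi2 : i < n)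
    (lam mu : Fin n → Bool) (hlam : lam ∈ pathSet n i) (hmu : mu ∈ pathSet n i)
    (hle : pathLE i lam mu)
    (P : Finset (Finset (ℤ × ℤ))) (hP : P ∈ Conf1 i lam mu)
    (o : List (Finset (ℤ × ℤ))) (hnd : o.Nodup) (hoP : o.toFinset = P)
    (hadm : Admissible i lam o) :
    (∀ j, j + 1 < o.length →
      stripHeight (o.getD (j + 1) ∅) < stripHeight (o.getD j ∅) →
      Distant (o.getD j ∅) (o.getD (j + 1) ∅) ∧ Admissible i lam (swapAt' o j)) ∧
    (∃ o' : List (Finset (ℤ × ℤ)),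
      Relation.ReflTransGen
        (fun o₁ o₂ => Admissible i lam o₁ ∧ ∃ j, j + 1 < o₁.length ∧
          stripHeight (o₁.getD (j + 1) ∅) < stripHeight (o₁.getD j ∅) ∧
          o₂ = swapAt' o₁ j) o o' ∧
      Admissible i lam o' ∧ o'.toFinset = P ∧
      ∀ j, j + 1 < o'.length →
        stripHeight (o'.getD j ∅) ≤ stripHeight (o'.getD (j + 1) ∅)) :=
  admissible_swap_general n i lam mu P hP o hnd hoP hadm
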